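/- Let N ≥ 1, let u : ℝ × ℝ → ℝ and U : ℝ × ℝ → ℝ^N be smooth solutions of the system u_t = ⟨U,U⟩ u_x + 2u⟨U,U_x⟩ + ⟨U,U_{xx}⟩ + ⟨U_x,U_x⟩ and U_t = U_{xxx} + u_{xx}U + u_x U_x - 2uu_x U - u²U_x + ⟨U,U⟩U_x - ⟨U,U_x⟩U. Define w := -u_x - ½u² + ½⟨U,U⟩ and W := U_x + uU. Then w and W satisfy w_t = -3⟨W,W_x⟩ and W_t = W_{xxx} + w_x W + 2w W_x. -/

import Mathlib

noncomputable section

/-- partial derivative in the first (space) variable -/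
def pdx (f : ℝ → ℝ → ℝ) : ℝ → ℝ → ℝ := fun x t => deriv (fun y => f y t) x

/-- partial derivative in the second (time) variable -/
def pdt (f : ℝ → ℝ → ℝ) : ℝ → ℝ → ℝ := fun x t => deriv (fun s => f x s) t

/-- smoothness of a function of two real variables -/
def smooth2 (f : ℝ → ℝ → ℝ) : Prop := ContDiff ℝ (⊤ : ℕ∞) (fun p : ℝ × ℝ => f p.1 p.2)

/-- componentwise partial x-derivative of a vector-valued function -/
def pdxV {N : ℕ} (U : ℝ → ℝ → Fin N → ℝ) : ℝ → ℝ → Fin N → ℝ :=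
  fun x t i => deriv (fun y => U y t i) x

/-- componentwise partial t-derivative of a vector-valued function -/
def pdtV {N : ℕ} (U : ℝ → ℝ → Fin N → ℝ) : ℝ → ℝ → Fin N → ℝ :=
  fun x t i => deriv (fun s => U x s i) t

/-- pointwise Euclidean inner product of two vector-valued functions -/
def ip {N : ℕ} (A B : ℝ → ℝ → Fin N → ℝ) : ℝ → ℝ → ℝ :=
  fun x t => ∑ i, A x t i * B x t i

/-- componentwise smoothness of a vector-valued function of two real variables -/
def smooth2V {N : ℕ} (U : ℝ → ℝ → Fin N → ℝ) : Prop :=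
  ∀ i, ContDiff ℝ (⊤ : ℕ∞) (fun p : ℝ × ℝ => U p.1 p.2 i)


theorem hda_congr {f : ℝ → ℝ} {d d' x : ℝ} (h : HasDerivAt f d x) (hd : d = d') :
    HasDerivAt f d' x := hd ▸ h

theorem hdX {f : ℝ → ℝ → ℝ} (hf : smooth2 f) (x t : ℝ) :
    HasDerivAt (fun y => f y t) (pdx f x t) x := by
  have h1 : Differentiable ℝ (fun p : ℝ × ℝ => f p.1 p.2) := hf.differentiable (by simp)
  have : DifferentiableAt ℝ (fun y => f y t) x :=
    (h1.comp ((differentiable_id).prodMk (differentiable_const t))).differentiableAt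
  exact this.hasDerivAt

theorem hdT {f : ℝ → ℝ → ℝ} (hf : smooth2 f) (x t : ℝ) :
    HasDerivAt (fun s => f x s) (pdt f x t) t := by
  have h1 : Differentiable ℝ (fun p : ℝ × ℝ => f p.1 p.2) := hf.differentiable (by simp)
  have : DifferentiableAt ℝ (fun s => f x s) t :=
    (h1.comp ((differentiable_const x).prodMk differentiable_id)).differentiableAt
  exact this.hasDerivAt

theorem pdx_fderiv {f : ℝ → ℝ → ℝ} (hf : smooth2 f) (x t : ℝ) :
    pdx f x t = fderiv ℝ (fun p : ℝ × ℝ => f p.1 p.2) (x, t) (1, 0) := by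
  have h1 := ((hf.differentiable (by simp)) (x, t)).hasFDerivAt
  have h2 : HasFDerivAt (fun y : ℝ => (y, t)) ((ContinuousLinearMap.id ℝ ℝ).prod 0) x :=
    HasFDerivAt.prodMk (hasFDerivAt_id x) (hasFDerivAt_const t x)
  have h4 := (h1.comp x h2).hasDerivAt
  rw [show pdx f x t = deriv ((fun p : ℝ × ℝ => f p.1 p.2) ∘ fun y => (y, t)) x from rfl,
    h4.deriv]
  simp

theorem pdt_fderiv {f : ℝ → ℝ → ℝ} (hf : smooth2 f) (x t : ℝ) :
    pdt f x t = fderiv ℝ (fun p : ℝ × ℝ => f p.1 p.2) (x, t) (0, 1) := by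
  have h1 := ((hf.differentiable (by simp)) (x, t)).hasFDerivAt
  have h2 : HasFDerivAt (fun s : ℝ => (x, s)) ((0 : ℝ →L[ℝ] ℝ).prod (ContinuousLinearMap.id ℝ ℝ)) t :=
    HasFDerivAt.prodMk (hasFDerivAt_const x t) (hasFDerivAt_id t)
  have h4 := (h1.comp t h2).hasDerivAt
  rw [show pdt f x t = deriv ((fun p : ℝ × ℝ => f p.1 p.2) ∘ fun s => (x, s)) t from rfl,
    h4.deriv]
  simp

theorem smooth2_pdx {f : ℝ → ℝ → ℝ} (hf : smooth2 f) : smooth2 (pdx f) := by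
  have h : (fun p : ℝ × ℝ => pdx f p.1 p.2)
      = fun p : ℝ × ℝ => fderiv ℝ (fun q : ℝ × ℝ => f q.1 q.2) p ((1 : ℝ), (0 : ℝ)) := by
    funext p
    rw [pdx_fderiv hf p.1 p.2, Prod.mk.eta]
  rw [smooth2, h]
  exact (hf.fderiv_right (by simp)).clm_apply contDiff_const

theorem pdt_pdx_comm {f : ℝ → ℝ → ℝ} (hf : smooth2 f) (x t : ℝ) :
    pdt (pdx f) x t = pdx (pdt f) x t := by
  set F : ℝ × ℝ → ℝ := fun p => f p.1 p.2 with hFdef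
  have hFc : ContDiff ℝ (⊤ : ℕ∞) F := hf
  have hFd : Differentiable ℝ F := hFc.differentiable (by simp)
  have hF' : ContDiff ℝ (⊤ : ℕ∞) (fderiv ℝ F) := hFc.fderiv_right (by simp)
  have hF'd : Differentiable ℝ (fderiv ℝ F) := hF'.differentiable (by simp)
  have hsymm := second_derivative_symmetric (f := F)
    (fun y => (hFd y).hasFDerivAt) ((hF'd (x, t)).hasFDerivAt) ((1 : ℝ), (0 : ℝ)) ((0 : ℝ), (1 : ℝ))
  have key : ∀ v : ℝ × ℝ, smooth2 (fun a b => fderiv ℝ F (a, b) v) := by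
    intro v
    have h : (fun p : ℝ × ℝ => fderiv ℝ F (p.1, p.2) v) = fun p => fderiv ℝ F p v := by
      funext p; rw [Prod.mk.eta]
    show ContDiff ℝ (⊤ : ℕ∞) (fun p : ℝ × ℝ => fderiv ℝ F (p.1, p.2) v)
    rw [h]
    exact hF'.clm_apply contDiff_const
  have ev : ∀ v : ℝ × ℝ, fderiv ℝ (fun p : ℝ × ℝ => fderiv ℝ F p v) (x, t)
      = (fderiv ℝ (fderiv ℝ F) (x, t)).flip v := by
    intro v
    rw [fderiv_clm_apply (hF'd.differentiableAt) (differentiableAt_const v)]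
    simp
  have c1 : pdt (pdx f) x t = pdt (fun a b => fderiv ℝ F (a, b) (1, 0)) x t := by
    unfold pdt
    rw [funext fun s => pdx_fderiv hf x s]
  have c2 : pdx (pdt f) x t = pdx (fun a b => fderiv ℝ F (a, b) (0, 1)) x t := by
    unfold pdx
    rw [funext fun y => pdt_fderiv hf y t]
  rw [c1, c2, pdt_fderiv (key (1, 0)) x t, pdx_fderiv (key (0, 1)) x t]
  have e1 : (fun p : ℝ × ℝ => fderiv ℝ F (p.1, p.2) ((1 : ℝ), (0 : ℝ)))
      = fun p => fderiv ℝ F p (1, 0) := by funext p; rw [Prod.mk.eta]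
  have e2 : (fun p : ℝ × ℝ => fderiv ℝ F (p.1, p.2) ((0 : ℝ), (1 : ℝ)))
      = fun p => fderiv ℝ F p (0, 1) := by funext p; rw [Prod.mk.eta]
  rw [e1, e2, ev, ev]
  simpa using hsymm.symm

theorem hdXV {N : ℕ} {U : ℝ → ℝ → Fin N → ℝ} (hU : smooth2V U) (x t : ℝ) (i : Fin N) :
    HasDerivAt (fun y => U y t i) (pdxV U x t i) x := hdX (f := fun a b => U a b i) (hU i) x t

theorem hdTV {N : ℕ} {U : ℝ → ℝ → Fin N → ℝ} (hU : smooth2V U) (x t : ℝ) (i : Fin N) :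
    HasDerivAt (fun s => U x s i) (pdtV U x t i) t := hdT (f := fun a b => U a b i) (hU i) x t

theorem smooth2V_pdxV {N : ℕ} {U : ℝ → ℝ → Fin N → ℝ} (hU : smooth2V U) :
    smooth2V (pdxV U) := fun i => smooth2_pdx (f := fun a b => U a b i) (hU i)

theorem ip_comm {N : ℕ} (A B : ℝ → ℝ → Fin N → ℝ) (x t : ℝ) :
    ip A B x t = ip B A x t := Finset.sum_congr rfl fun i _ => mul_comm _ _

theorem hdX_ip {N : ℕ} {A B : ℝ → ℝ → Fin N → ℝ} (hA : smooth2V A) (hB : smooth2V B)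
    (x t : ℝ) : HasDerivAt (fun y => ip A B y t)
      (ip (pdxV A) B x t + ip A (pdxV B) x t) x := by
  have H : HasDerivAt (fun y => ∑ i, A y t i * B y t i)
      (∑ i, (pdxV A x t i * B x t i + A x t i * pdxV B x t i)) x :=
    HasDerivAt.fun_sum fun i _ => (hdXV hA x t i).mul (hdXV hB x t i)
  exact hda_congr H Finset.sum_add_distrib

theorem hdT_ip {N : ℕ} {A B : ℝ → ℝ → Fin N → ℝ} (hA : smooth2V A) (hB : smooth2V B)
    (x t : ℝ) : HasDerivAt (fun s => ip A B x s)
      (ip (pdtV A) B x t + ip A (pdtV B) x t) t := by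
  have H : HasDerivAt (fun s => ∑ i, A x s i * B x s i)
      (∑ i, (pdtV A x t i * B x t i + A x t i * pdtV B x t i)) t :=
    HasDerivAt.fun_sum fun i _ => (hdTV hA x t i).mul (hdTV hB x t i)
  exact hda_congr H Finset.sum_add_distrib

/-- the Miura-type transformation maps system (4.12) to the
    multi-component Drinfel'd–Sokolov system. -/
theorem stmt_3 {N : ℕ} (hN : 1 ≤ N) (u : ℝ → ℝ → ℝ) (U : ℝ → ℝ → Fin N → ℝ)
    (hu : smooth2 u) (hU : smooth2V U)
    (heq1 : ∀ x t, pdt u x t =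
      ip U U x t * pdx u x t + 2 * u x t * ip U (pdxV U) x t
      + ip U (pdxV (pdxV U)) x t + ip (pdxV U) (pdxV U) x t)
    (heq2 : ∀ x t i, pdtV U x t i =
      pdxV (pdxV (pdxV U)) x t i + pdx (pdx u) x t * U x t i
      + pdx u x t * pdxV U x t i - 2 * u x t * pdx u x t * U x t i
      - (u x t) ^ 2 * pdxV U x t i
      + ip U U x t * pdxV U x t i - ip U (pdxV U) x t * U x t i)
    (w : ℝ → ℝ → ℝ) (W : ℝ → ℝ → Fin N → ℝ)
    (hw : ∀ x t, w x t = -pdx u x t - (1/2) * (u x t) ^ 2 + (1/2) * ip U U x t)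
    (hW : ∀ x t i, W x t i = pdxV U x t i + u x t * U x t i) :
    (∀ x t, pdt w x t = -3 * ip W (pdxV W) x t) ∧
    (∀ x t i, pdtV W x t i = pdxV (pdxV (pdxV W)) x t i
      + pdx w x t * W x t i + 2 * w x t * pdxV W x t i) := by
  have su1 := smooth2_pdx hu
  have su2 := smooth2_pdx su1
  have hU1 := smooth2V_pdxV hU
  have hU2 := smooth2V_pdxV hU1
  have hU3 := smooth2V_pdxV hU2
  have hW1 : ∀ x t i, pdxV W x t i = pdxV (pdxV U) x t i + pdx u x t * U x t i
      + u x t * pdxV U x t i := by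
    intro x t i
    show deriv (fun y => W y t i) x = _
    rw [funext fun y => hW y t i]
    exact (hda_congr ((hdXV hU1 x t i).add ((hdX hu x t).mul (hdXV hU x t i)))
      (by ring)).deriv
  have hW2 : ∀ x t i, pdxV (pdxV W) x t i = pdxV (pdxV (pdxV U)) x t i
      + pdx (pdx u) x t * U x t i + 2 * pdx u x t * pdxV U x t i
      + u x t * pdxV (pdxV U) x t i := by
    intro x t i
    show deriv (fun y => pdxV W y t i) x = _
    rw [funext fun y => hW1 y t i]
    exact (hda_congr (((hdXV hU2 x t i).add ((hdX su1 x t).mul (hdXV hU x t i))).add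
      ((hdX hu x t).mul (hdXV hU1 x t i))) (by ring)).deriv
  have hW3 : ∀ x t i, pdxV (pdxV (pdxV W)) x t i = pdxV (pdxV (pdxV (pdxV U))) x t i
      + pdx (pdx (pdx u)) x t * U x t i + 3 * pdx (pdx u) x t * pdxV U x t i
      + 3 * pdx u x t * pdxV (pdxV U) x t i + u x t * pdxV (pdxV (pdxV U)) x t i := by
    intro x t i
    show deriv (fun y => pdxV (pdxV W) y t i) x = _
    rw [funext fun y => hW2 y t i]
    exact (hda_congr ((((hdXV hU3 x t i).add ((hdX su2 x t).mul (hdXV hU x t i))).add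
      (((hdX su1 x t).const_mul 2).mul (hdXV hU1 x t i))).add
      ((hdX hu x t).mul (hdXV hU2 x t i))) (by ring)).deriv
  constructor
  · intro x t
    have A1 : pdt w x t = -(pdt (pdx u) x t) - u x t * pdt u x t
        + ((1/2) * ip (pdtV U) U x t + (1/2) * ip U (pdtV U) x t) := by
      show deriv (fun s => w x s) t = _
      rw [funext fun s => hw x s]
      exact (hda_congr (((hdT su1 x t).neg.sub
        (((hdT hu x t).pow 2).const_mul (1/2))).add
        ((hdT_ip hU hU x t).const_mul (1/2))) (by ring)).deriv
    have A2 : pdt (pdx u) x t = pdx (pdt u) x t := pdt_pdx_comm hu x t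
    have A3 : pdx (pdt u) x t =
        (ip (pdxV U) U x t + ip U (pdxV U) x t) * pdx u x t
        + ip U U x t * pdx (pdx u) x t
        + 2 * pdx u x t * ip U (pdxV U) x t
        + 2 * u x t * (ip (pdxV U) (pdxV U) x t + ip U (pdxV (pdxV U)) x t)
        + (ip (pdxV U) (pdxV (pdxV U)) x t + ip U (pdxV (pdxV (pdxV U))) x t)
        + (ip (pdxV (pdxV U)) (pdxV U) x t + ip (pdxV U) (pdxV (pdxV U)) x t) := by
      show deriv (fun y => pdt u y t) x = _
      rw [funext fun y => heq1 y t]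
      exact (hda_congr ((((hdX_ip hU hU x t).mul (hdX su1 x t)).add
        (((hdX hu x t).const_mul 2).mul (hdX_ip hU hU1 x t))).add
        (hdX_ip hU hU2 x t) |>.add (hdX_ip hU1 hU1 x t)) (by ring)).deriv
    have A4 : ip U (pdtV U) x t = ip U (pdxV (pdxV (pdxV U))) x t
        + pdx (pdx u) x t * ip U U x t + pdx u x t * ip U (pdxV U) x t
        - 2 * u x t * pdx u x t * ip U U x t - u x t ^ 2 * ip U (pdxV U) x t := by
      calc ip U (pdtV U) x t
          = ∑ i, (U x t i * pdxV (pdxV (pdxV U)) x t i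
            + pdx (pdx u) x t * (U x t i * U x t i)
            + pdx u x t * (U x t i * pdxV U x t i)
            + (-(2 * u x t * pdx u x t)) * (U x t i * U x t i)
            + (-(u x t ^ 2)) * (U x t i * pdxV U x t i)
            + ip U U x t * (U x t i * pdxV U x t i)
            + (-(ip U (pdxV U) x t)) * (U x t i * U x t i)) :=
            Finset.sum_congr rfl fun i _ => by rw [heq2 x t i]; ring
        _ = _ := by
            simp only [Finset.sum_add_distrib, ← Finset.mul_sum, ip]
            try ring
    have A6 : ip W (pdxV W) x t = ip (pdxV U) (pdxV (pdxV U)) x t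
        + pdx u x t * ip U (pdxV U) x t + u x t * ip (pdxV U) (pdxV U) x t
        + u x t * ip U (pdxV (pdxV U)) x t + u x t * pdx u x t * ip U U x t
        + u x t * u x t * ip U (pdxV U) x t := by
      calc ip W (pdxV W) x t
          = ∑ i, (pdxV U x t i * pdxV (pdxV U) x t i
            + pdx u x t * (U x t i * pdxV U x t i)
            + u x t * (pdxV U x t i * pdxV U x t i)
            + u x t * (U x t i * pdxV (pdxV U) x t i)
            + (u x t * pdx u x t) * (U x t i * U x t i)
            + (u x t * u x t) * (U x t i * pdxV U x t i)) :=
            Finset.sum_congr rfl fun i _ => by rw [hW x t i, hW1 x t i]; ring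
        _ = _ := by
            simp only [Finset.sum_add_distrib, ← Finset.mul_sum, ip]
            try ring
    rw [A1, A2, A3, ip_comm (pdtV U) U x t, A4, heq1 x t, A6,
      ip_comm (pdxV U) U x t, ip_comm (pdxV (pdxV U)) (pdxV U) x t]
    ring
  · intro x t i
    have B1 : pdtV W x t i = pdtV (pdxV U) x t i + pdt u x t * U x t i
        + u x t * pdtV U x t i := by
      show deriv (fun s => W x s i) t = _
      rw [funext fun s => hW x s i]
      exact (hda_congr ((hdTV hU1 x t i).add ((hdT hu x t).mul (hdTV hU x t i)))
        (by ring)).deriv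
    have B2 : pdtV (pdxV U) x t i = pdxV (pdtV U) x t i :=
      pdt_pdx_comm (f := fun a b => U a b i) (hU i) x t
    have B3 : pdxV (pdtV U) x t i = pdxV (pdxV (pdxV (pdxV U))) x t i
        + pdx (pdx (pdx u)) x t * U x t i + 2 * pdx (pdx u) x t * pdxV U x t i
        + pdx u x t * pdxV (pdxV U) x t i
        - 2 * pdx u x t ^ 2 * U x t i - 2 * u x t * pdx (pdx u) x t * U x t i
        - 4 * u x t * pdx u x t * pdxV U x t i - u x t ^ 2 * pdxV (pdxV U) x t i
        + (ip (pdxV U) U x t + ip U (pdxV U) x t) * pdxV U x t i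
        + ip U U x t * pdxV (pdxV U) x t i
        - (ip (pdxV U) (pdxV U) x t + ip U (pdxV (pdxV U)) x t) * U x t i
        - ip U (pdxV U) x t * pdxV U x t i := by
      show deriv (fun y => pdtV U y t i) x = _
      rw [funext fun y => heq2 y t i]
      have HC := ((((((hdXV hU3 x t i).add
        ((hdX su2 x t).mul (hdXV hU x t i))).add
        ((hdX su1 x t).mul (hdXV hU1 x t i))).sub
        ((((hdX hu x t).const_mul 2).mul (hdX su1 x t)).mul (hdXV hU x t i))).sub
        (((hdX hu x t).pow 2).mul (hdXV hU1 x t i))).add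
        ((hdX_ip hU hU x t).mul (hdXV hU1 x t i))).sub
        ((hdX_ip hU hU1 x t).mul (hdXV hU x t i))
      exact (hda_congr HC (by simp only [Pi.mul_apply, Pi.pow_apply]; ring)).deriv
    have B7 : pdx w x t = -(pdx (pdx u) x t) - u x t * pdx u x t
        + ((1/2) * ip (pdxV U) U x t + (1/2) * ip U (pdxV U) x t) := by
      show deriv (fun y => w y t) x = _
      rw [funext fun y => hw y t]
      exact (hda_congr (((hdX su1 x t).neg.sub
        (((hdX hu x t).pow 2).const_mul (1/2))).add
        ((hdX_ip hU hU x t).const_mul (1/2))) (by ring)).deriv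
    rw [B1, B2, B3, heq1 x t, heq2 x t i, hW3 x t i, B7, hw x t, hW x t i, hW1 x t i,
      ip_comm (pdxV U) U x t]
    ring
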